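/- arXiv:2604.26563 — 6 statements merged into one kernel-verified Lean document; each statement's English description precedes it below -/
import Mathlib

section
/- In a finite tree G, if S ⊆ T are nonempty subsets of X and ℓ ∈ X, then the distance minimizer π(ℓ, T) of ℓ on H(T) lies on the path P(ℓ, π(ℓ, S)) from ℓ to the distance minimizer of ℓ on H(S). -/
/-!
A minimizer `m` of `d(ℓ, ·)` on a path-convex set `C` of a tree is a gate: it lies on the path
from `ℓ` to every `y ∈ C`. Indeed, the median `c` of `ℓ, m, y` lies on `P(m, y) ⊆ C` and on
`P(ℓ, m)`, so `d(ℓ, c) + d(c, m) = d(ℓ, m) ≤ d(ℓ, c)` forces `c = m`, and `c ∈ P(ℓ, y)`.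
The theorem follows since `H(T)` is path-convex and contains `H(S) ∋ π(ℓ, S)`.
-/

open SimpleGraph

/-- `z` lies on a path from `x` to `y` in `G` (in a tree, the unique path). -/
def pathSet {X : Type*} (G : SimpleGraph X) (x y z : X) : Prop :=
  ∃ p : G.Walk x y, p.IsPath ∧ z ∈ p.support

/-- The path hull `H(S)`: union of paths between pairs of nodes of `S`. -/
def hull {X : Type*} (G : SimpleGraph X) (S : Set X) (z : X) : Prop :=
  ∃ x ∈ S, ∃ y ∈ S, pathSet G x y z

/-- `m` is a distance minimizer of `x` on the path hull of `S`. -/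
def isMinimizer {X : Type*} (G : SimpleGraph X) (x : X) (S : Set X) (m : X) : Prop :=
  hull G S m ∧ ∀ y, hull G S y → G.dist x m ≤ G.dist x y

/-- `ℓ` is a leaf: it has exactly one neighbor. -/
def isLeaf {X : Type*} (G : SimpleGraph X) (ℓ : X) : Prop := ∃! x, G.Adj ℓ x

/-- `t` is the top-ranked alternative of the strict preference `P`. -/
def isTop {X : Type*} (P : X → X → Prop) (t : X) : Prop := ∀ y, y ≠ t → P t y

/-- `P` with peak `t` is single-peaked on the tree `G`. -/
def singlePeakedAt {X : Type*} (G : SimpleGraph X) (P : X → X → Prop) (t : X) : Prop :=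
  ∀ a b, a ≠ b → pathSet G t a b → P b a

namespace SimpleGraph

variable {X : Type*} {G : SimpleGraph X}

lemma pathSet_symm {x y w : X} (h : pathSet G x y w) : pathSet G y x w := by
  obtain ⟨p, hp, hw⟩ := h
  exact ⟨p.reverse, hp.reverse, by rwa [Walk.support_reverse, List.mem_reverse]⟩

lemma Walk.IsPath.append_of_support_inter {u c v : X} {p : G.Walk u c} {q : G.Walk c v}
    (hp : p.IsPath) (hq : q.IsPath) (hpq : ∀ w ∈ p.support, w ∈ q.support → w = c) :
    (p.append q).IsPath := by
  rw [Walk.isPath_def, Walk.support_append]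
  refine hp.support_nodup.append hq.support_nodup.tail fun w hwp hwq => ?_
  obtain rfl := hpq w hwp (List.mem_of_mem_tail hwq)
  have hnodup := hq.support_nodup
  rw [← q.cons_tail_support] at hnodup
  exact (List.nodup_cons.mp hnodup).1 hwq

namespace IsTree

variable (hG : G.IsTree)
include hG

lemma pathSet_iff {x y : X} {p : G.Walk x y} (hp : p.IsPath) (w : X) :
    pathSet G x y w ↔ w ∈ p.support := by
  refine ⟨?_, fun hw => ⟨p, hp, hw⟩⟩
  rintro ⟨q, hq, hw⟩
  rwa [(hG.existsUnique_path x y).unique hq hp] at hw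

lemma pathSet_trans {u v c w : X} (hc : pathSet G u v c) (hw : pathSet G u c w) :
    pathSet G u v w := by
  classical
  obtain ⟨p, hp, hcp⟩ := hc
  rw [hG.pathSet_iff (hp.takeUntil hcp)] at hw
  exact ⟨p, hp, p.support_takeUntil_subset_support hcp hw⟩

lemma pathSet_split {x y c w : X} (hc : pathSet G x y c) (hw : pathSet G x y w) :
    pathSet G x c w ∨ pathSet G c y w := by
  classical
  obtain ⟨p, hp, hcp⟩ := hc
  rw [hG.pathSet_iff hp, ← p.take_spec hcp, Walk.mem_support_append_iff] at hw
  exact hw.imp (fun h => ⟨_, hp.takeUntil hcp, h⟩) (fun h => ⟨_, hp.dropUntil hcp, h⟩)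

lemma length_eq_dist {x y : X} {p : G.Walk x y} (hp : p.IsPath) : p.length = G.dist x y := by
  obtain ⟨q, hq, hlen⟩ := hG.connected.exists_path_of_dist x y
  rwa [(hG.existsUnique_path x y).unique hp hq]

lemma dist_add_dist_of_pathSet {x y c : X} (hc : pathSet G x y c) :
    G.dist x c + G.dist c y = G.dist x y := by
  classical
  obtain ⟨p, hp, hcp⟩ := hc
  rw [← hG.length_eq_dist (hp.takeUntil hcp), ← hG.length_eq_dist (hp.dropUntil hcp),
    ← hG.length_eq_dist hp, ← Walk.length_append, p.take_spec hcp]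

/-- The median is the vertex of `P(z, m)` closest to `u`. -/
lemma exists_median (u z m : X) :
    ∃ c, pathSet G z m c ∧ pathSet G u z c ∧ pathSet G u m c := by
  classical
  obtain ⟨p, hp, -⟩ := hG.existsUnique_path z m
  obtain ⟨c, hcp, hmin⟩ := p.support.toFinset.exists_min_image (G.dist u) ⟨z, by simp⟩
  rw [List.mem_toFinset] at hcp
  obtain ⟨q, hq, -⟩ := hG.existsUnique_path u c
  have hmeet : ∀ v ∈ q.support, v ∈ p.support → v = c := by
    intro v hvq hvp
    have hsplit := hG.dist_add_dist_of_pathSet ⟨q, hq, hvq⟩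
    have hle := hmin v (List.mem_toFinset.mpr hvp)
    exact (hG.connected v c).dist_eq_zero_iff.mp (by omega)
  have hextend {y : X} (r : G.Walk c y) (hr : r.IsPath) (hrp : r.support ⊆ p.support) :
      pathSet G u y c :=
    ⟨q.append r, hq.append_of_support_inter hr fun v hvq hvr => hmeet v hvq (hrp hvr),
      (q.mem_support_append_iff r).mpr (Or.inl q.end_mem_support)⟩
  refine ⟨c, ⟨p, hp, hcp⟩, hextend _ (hp.takeUntil hcp).reverse ?_,
    hextend _ (hp.dropUntil hcp) (p.support_dropUntil_subset_support hcp)⟩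
  simpa only [Walk.support_reverse, List.reverse_subset] using
    p.support_takeUntil_subset_support hcp

lemma pathSet_or_pathSet_of_pathSet (u : X) {z m w : X} (hw : pathSet G z m w) :
    pathSet G u z w ∨ pathSet G u m w := by
  obtain ⟨c, hczm, hcuz, hcum⟩ := hG.exists_median u z m
  refine (hG.pathSet_split hczm hw).imp (fun h => ?_) (fun h => ?_)
  · exact pathSet_symm (hG.pathSet_trans (pathSet_symm hcuz) h)
  · exact pathSet_symm (hG.pathSet_trans (pathSet_symm hcum) (pathSet_symm h))

end IsTree

def IsPathConvex (G : SimpleGraph X) (C : X → Prop) : Prop :=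
  ∀ ⦃x y w⦄, C x → C y → pathSet G x y w → C w

lemma hull_mono {S T : Set X} (hST : S ⊆ T) {w : X} (hw : hull G S w) : hull G T w := by
  obtain ⟨x, hx, y, hy, hw⟩ := hw
  exact ⟨x, hST hx, y, hST hy, hw⟩

lemma IsTree.isPathConvex_hull (hG : G.IsTree) (T : Set X) : IsPathConvex G (hull G T) := by
  rintro x y w ⟨a, ha, b, hb, hx⟩ ⟨c, hc, d, hd, hy⟩ hw
  rcases hG.pathSet_or_pathSet_of_pathSet a hw with haw | haw
  · exact ⟨a, ha, b, hb, hG.pathSet_trans hx haw⟩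
  · rcases hG.pathSet_or_pathSet_of_pathSet c (pathSet_symm haw) with hcw | hcw
    · exact ⟨c, hc, d, hd, hG.pathSet_trans hy hcw⟩
    · exact ⟨c, hc, a, ha, hcw⟩

lemma IsTree.pathSet_of_isPathConvex (hG : G.IsTree) {C : X → Prop} (hC : IsPathConvex G C)
    {ℓ m y : X} (hm : C m) (hmin : ∀ w, C w → G.dist ℓ m ≤ G.dist ℓ w) (hy : C y) :
    pathSet G ℓ y m := by
  obtain ⟨c, hcmy, hcℓm, hcℓy⟩ := hG.exists_median ℓ m y
  have hsplit := hG.dist_add_dist_of_pathSet hcℓm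
  have hle := hmin c (hC hm hy hcmy)
  obtain rfl : c = m := (hG.connected c m).dist_eq_zero_iff.mp (by omega)
  exact hcℓy

end SimpleGraph

theorem minimizer_mono_on_path_general {X : Type*}
    (G : SimpleGraph X) (hG : G.IsTree)
    (S T : Set X) (hST : S ⊆ T)
    (ℓ z m : X) (hz : isMinimizer G ℓ S z) (hm : isMinimizer G ℓ T m) :
    pathSet G ℓ z m :=
  hG.pathSet_of_isPathConvex (hG.isPathConvex_hull T) hm.1 hm.2 (hull_mono hST hz.1)

theorem minimizer_mono_on_path {X : Type*} [Fintype X]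
    (G : SimpleGraph X) (hG : G.IsTree)
    (S T : Set X) (hS : S.Nonempty) (hST : S ⊆ T)
    (ℓ z m : X) (hz : isMinimizer G ℓ S z) (hm : isMinimizer G ℓ T m) :
    pathSet G ℓ z m :=
  minimizer_mono_on_path_general G hG S T hST ℓ z m hz hm
end

section
/- In a finite tree G, for any nonempty S ⊆ X and any x ∈ X, the distance minimizer π(x,S) lies on the path P(x,s) for every s ∈ S. -/
open SimpleGraph

/-
Let `m` minimize the distance from `x` over the hull and let `s ∈ S`; then `m` lies on the path
from some `c ∈ S` to `s`. If `m ≠ x`, let `y` be the neighbour of `m` towards `x`. Being closer to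
`x`, `y` is outside the hull, so in particular `y ∉ P(m, s) ⊆ P(c, s)`; hence the path from `y` to
`s` is the edge `y m` followed by `P(m, s)`, and `m ∈ P(y, s) ⊆ P(y, x) ∪ P(x, s)`. As `m ∉ P(y, x)`,
we get `m ∈ P(x, s)`.
-/

namespace SimpleGraph

variable {X : Type*} {G : SimpleGraph X}

theorem IsTree.pathSet_iff_mem_support (hG : G.IsTree) {u v z : X} {p : G.Walk u v}
    (hp : p.IsPath) : pathSet G u v z ↔ z ∈ p.support := by
  refine ⟨fun ⟨q, hq, hz⟩ ↦ ?_, fun hz ↦ ⟨p, hp, hz⟩⟩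
  have hqp : (⟨q, hq⟩ : G.Path u v) = ⟨p, hp⟩ := (hG.isAcyclic.subsingleton_path u v).elim _ _
  exact Subtype.mk.inj hqp ▸ hz

theorem IsTree.pathSet_left (hG : G.IsTree) (u v : X) : pathSet G u v u :=
  let ⟨p, hp⟩ := (hG.existsUnique_path u v).exists
  ⟨p, hp, p.start_mem_support⟩

theorem pathSet_symm_s3 {u v z : X} (h : pathSet G u v z) : pathSet G v u z :=
  let ⟨p, hp, hz⟩ := h
  ⟨p.reverse, hp.reverse, by simpa using hz⟩

theorem IsTree.pathSet_trans_s3 (hG : G.IsTree) {u v z w : X}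
    (hz : pathSet G u v z) (hw : pathSet G z v w) : pathSet G u v w := by
  classical
  obtain ⟨p, hp, hzp⟩ := hz
  have hw' : w ∈ (p.dropUntil z hzp).support :=
    (hG.pathSet_iff_mem_support (hp.dropUntil hzp)).mp hw
  exact ⟨p, hp, p.support_dropUntil_subset_support hzp hw'⟩

theorem IsTree.pathSet_or_pathSet (hG : G.IsTree) {u v z : X} (h : pathSet G u v z) (t : X) :
    pathSet G u t z ∨ pathSet G t v z := by
  classical
  obtain ⟨q, hq⟩ := (hG.existsUnique_path u t).exists
  obtain ⟨r, hr⟩ := (hG.existsUnique_path t v).exists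
  have hz : z ∈ (q.append r).bypass.support :=
    (hG.pathSet_iff_mem_support (q.append r).bypass_isPath).mp h
  rcases (Walk.mem_support_append_iff q r).mp ((q.append r).support_bypass_subset_support hz)
    with hzq | hzr
  · exact .inl ⟨q, hq, hzq⟩
  · exact .inr ⟨r, hr, hzr⟩

theorem IsTree.pathSet_of_adj_of_not_pathSet (hG : G.IsTree) {y m s : X} (hadj : G.Adj y m)
    (hy : ¬ pathSet G m s y) : pathSet G y s m := by
  obtain ⟨q, hq⟩ := (hG.existsUnique_path m s).exists
  exact ⟨.cons hadj q, hq.cons fun hyq ↦ hy ⟨q, hq, hyq⟩,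
    List.mem_cons_of_mem y q.start_mem_support⟩

theorem IsTree.length_eq_dist_s3 (hG : G.IsTree) {u v : X} {p : G.Walk u v} (hp : p.IsPath) :
    p.length = G.dist u v := by
  obtain ⟨q, hq⟩ := hG.connected.exists_walk_length_eq_dist u v
  have hpq : (⟨p, hp⟩ : G.Path u v) = ⟨q, q.isPath_of_length_eq_dist hq⟩ :=
    (hG.isAcyclic.subsingleton_path u v).elim _ _
  rw [Subtype.mk.inj hpq, hq]

theorem IsTree.dist_lt_of_isPath_cons (hG : G.IsTree) {m y x : X} {h : G.Adj m y}
    {p : G.Walk y x} (hp : (Walk.cons h p).IsPath) : G.dist x y < G.dist x m := by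
  rw [SimpleGraph.dist_comm (u := x), SimpleGraph.dist_comm (u := x), ← hG.length_eq_dist_s3 hp,
    Walk.length_cons]
  exact Nat.lt_succ_of_le (dist_le p)

theorem IsTree.exists_pathSet_of_hull (hG : G.IsTree) {S : Set X} {m : X} (hm : hull G S m)
    (s : X) : ∃ c ∈ S, pathSet G c s m := by
  obtain ⟨a, ha, b, hb, hmab⟩ := hm
  rcases hG.pathSet_or_pathSet hmab s with h | h
  · exact ⟨a, ha, h⟩
  · exact ⟨b, hb, pathSet_symm_s3 h⟩

end SimpleGraph

theorem minimizer_on_path_to_each_general {X : Type*}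
    (G : SimpleGraph X) (hG : G.IsTree)
    (S : Set X)
    (x m : X) (hm : isMinimizer G x S m) :
    ∀ s ∈ S, pathSet G x s m := by
  intro s hs
  obtain ⟨hm_hull, hm_min⟩ := hm
  obtain ⟨c, hc, hm_cs⟩ := hG.exists_pathSet_of_hull hm_hull s
  obtain ⟨q, hq⟩ := (hG.existsUnique_path m x).exists
  cases q with
  | nil => exact hG.pathSet_left _ s
  | @cons _ y _ hmy p =>
    have hy_hull : ¬ hull G S y := fun hy ↦ (hG.dist_lt_of_isPath_cons hq).not_ge (hm_min y hy)
    have hm_ys : pathSet G y s m := hG.pathSet_of_adj_of_not_pathSet hmy.symm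
      fun hy ↦ hy_hull ⟨c, hc, s, hs, hG.pathSet_trans_s3 hm_cs hy⟩
    have hm_not_yx : ¬ pathSet G y x m := fun h ↦
      ((Walk.cons_isPath_iff hmy p).mp hq).2 ((hG.pathSet_iff_mem_support hq.of_cons).mp h)
    exact (hG.pathSet_or_pathSet hm_ys x).resolve_left hm_not_yx

theorem minimizer_on_path_to_each {X : Type*} [Fintype X]
    (G : SimpleGraph X) (hG : G.IsTree)
    (S : Set X) (hS : S.Nonempty)
    (x m : X) (hm : isMinimizer G x S m) :
    ∀ s ∈ S, pathSet G x s m :=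
  minimizer_on_path_to_each_general G hG S x m hm
end

section
/- If the tree G is a line, then every extreme rule on G is Pareto efficient on any domain D of strict preferences: at no profile P is there an alternative a with a P_i f^ℓ(P) for all agents i. -/
open SimpleGraph

/-! On a line every vertex has at most two neighbours. If the point `c` of the hull `H(S)`
nearest to the leaf `ℓ` were not in `S`, it would be an interior vertex of a path between two
points of `S`, so both its neighbours would lie in `H(S)`. Since `c ≠ ℓ` (a leaf has only one
neighbour), one of them is closer to `ℓ`, a contradiction. So `c` is the peak of some agent, who
prefers nothing to it. -/

namespace SimpleGraph

variable {V : Type*} {G : SimpleGraph V}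

lemma Reachable.exists_adj_dist_lt {u v : V} (h : G.Reachable u v) (hne : u ≠ v) :
    ∃ x, G.Adj v x ∧ G.dist u x < G.dist u v := by
  obtain ⟨p, hp⟩ := h.symm.exists_walk_length_eq_dist
  have hnil : ¬ p.Nil := fun hnil => hne (hnil.eq).symm
  refine ⟨p.snd, p.adj_snd hnil, ?_⟩
  calc G.dist u p.snd = G.dist p.snd u := dist_comm
    _ ≤ p.tail.length := dist_le p.tail
    _ < p.length := by rw [← p.length_tail_add_one hnil]; omega
    _ = G.dist u v := by rw [hp, dist_comm]

lemma Walk.IsPath.exists_adj_ne_of_mem_support {x y c : V} {p : G.Walk x y} (hp : p.IsPath)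
    (hc : c ∈ p.support) (hcx : c ≠ x) (hcy : c ≠ y) :
    ∃ u w, u ≠ w ∧ G.Adj c u ∧ G.Adj c w ∧ u ∈ p.support ∧ w ∈ p.support := by
  obtain ⟨k, rfl, hk⟩ := Walk.mem_support_iff_exists_getVert.mp hc
  have hk0 : k ≠ 0 := by rintro rfl; exact hcx p.getVert_zero
  have hkl : k < p.length := lt_of_le_of_ne hk fun h => hcy (h ▸ p.getVert_length)
  refine ⟨p.getVert (k - 1), p.getVert (k + 1), fun h => ?_, ?_, p.adj_getVert_succ hkl,
    p.getVert_mem_support _, p.getVert_mem_support _⟩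
  · have := hp.getVert_injOn (by simp only [Set.mem_ofPred_eq]; omega)
      (by simp only [Set.mem_ofPred_eq]; omega) h
    omega
  · have := p.adj_getVert_succ (i := k - 1) (by omega)
    rwa [Nat.sub_add_cancel (Nat.pos_of_ne_zero hk0), adj_comm] at this

lemma eq_or_eq_of_adj_of_degree_le_two {v u w x : V} [Fintype (G.neighborSet v)]
    (hdeg : G.degree v ≤ 2) (hu : G.Adj v u) (hw : G.Adj v w) (huw : u ≠ w) (hx : G.Adj v x) :
    x = u ∨ x = w := by
  classical
  by_contra! hxuw
  have hsub : ({x, u, w} : Finset V) ⊆ G.neighborFinset v := by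
    simp [Finset.insert_subset_iff, hu, hw, hx]
  have := Finset.card_le_card hsub
  rw [Finset.card_insert_of_notMem (by simp [hxuw.1, hxuw.2]), Finset.card_pair huw,
    card_neighborFinset_eq_degree] at this
  omega

end SimpleGraph

open SimpleGraph

lemma mem_of_isMinimizer_of_degree_le_two {X : Type*} {G : SimpleGraph X} [G.LocallyFinite]
    (hconn : G.Preconnected) (hdeg : ∀ v, G.degree v ≤ 2) {ℓ : X} (hℓ : isLeaf G ℓ)
    {S : Set X} {c : X} (hc : isMinimizer G ℓ S c) : c ∈ S := by
  by_contra hcS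
  obtain ⟨⟨x, hx, y, hy, p, hp, hcp⟩, hmin⟩ := hc
  obtain ⟨u, w, huw, hu, hw, hup, hwp⟩ := hp.exists_adj_ne_of_mem_support hcp
    (by rintro rfl; exact hcS hx) (by rintro rfl; exact hcS hy)
  have hcℓ : ℓ ≠ c := by rintro rfl; exact huw (hℓ.unique hu hw)
  obtain ⟨z, hz, hzℓ⟩ := (hconn ℓ c).exists_adj_dist_lt hcℓ
  have hz_hull : hull G S z := by
    obtain rfl | rfl := eq_or_eq_of_adj_of_degree_le_two (hdeg c) hu hw huw hz
    exacts [⟨x, hx, y, hy, p, hp, hup⟩, ⟨x, hx, y, hy, p, hp, hwp⟩]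
  exact (hmin z hz_hull).not_gt hzℓ

lemma not_rel_of_isTop {X : Type*} {P : X → X → Prop} [Std.Asymm P] {t : X} (ht : isTop P t)
    (a : X) : ¬ P a t := by
  by_cases hat : a = t
  · subst hat; exact irrefl a
  · exact asymm (ht a hat)

theorem extreme_rule_on_line_efficient_general {X : Type*} [Fintype X]
    (G : SimpleGraph X) [DecidableRel G.Adj] (hG : G.IsTree)
    (hline : ∀ v : X, G.degree v ≤ 2)
    (ℓ : X) (hℓ : isLeaf G ℓ)
    (n : ℕ)
    (P : Fin n → (X → X → Prop)) (hP : ∀ i, IsStrictTotalOrder X (P i))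
    (t : Fin n → X) (ht : ∀ i, isTop (P i) (t i))
    (c : X) (hc : isMinimizer G ℓ (Set.range t) c) :
    ¬ ∃ a : X, ∀ i, P i a c := by
  rintro ⟨a, ha⟩
  obtain ⟨k, rfl⟩ := mem_of_isMinimizer_of_degree_le_two hG.connected.preconnected hline hℓ hc
  have := hP k
  exact not_rel_of_isTop (ht k) a (ha k)

theorem extreme_rule_on_line_efficient {X : Type*} [Fintype X] [DecidableEq X]
    (G : SimpleGraph X) [DecidableRel G.Adj] (hG : G.IsTree)
    (hline : ∀ v : X, G.degree v ≤ 2)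
    (ℓ : X) (hℓ : isLeaf G ℓ)
    (n : ℕ) (hn : 0 < n)
    (P : Fin n → (X → X → Prop)) (hP : ∀ i, IsStrictTotalOrder X (P i))
    (t : Fin n → X) (ht : ∀ i, isTop (P i) (t i))
    (c : X) (hc : isMinimizer G ℓ (Set.range t) c) :
    ¬ ∃ a : X, ∀ i, P i a c :=
  extreme_rule_on_line_efficient_general G hG hline ℓ hℓ n P hP t ht c hc
end

section
/- (Claim 1 in the proof of the main theorem) Let G be a tree, ℓ a node, S ⊆ X nonempty, and t, t' ∈ X. Let z = π(ℓ,S), x = π(ℓ, S ∪ {t}), y = π(ℓ, S ∪ {t'}). Then x and y both lie on the path P(ℓ,z). -/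
open SimpleGraph

set_option linter.unusedSectionVars false

namespace Claim1Aux

variable {X : Type*} [DecidableEq X] {G : SimpleGraph X}

lemma path_unique (hG : G.IsTree) {u v : X} {p q : G.Walk u v} (hp : p.IsPath) (hq : q.IsPath) :
    p = q := (hG.existsUnique_path u v).unique hp hq

lemma pathSet_symm {u v m : X} (h : pathSet G u v m) : pathSet G v u m := by
  obtain ⟨p, hp, hm⟩ := h
  exact ⟨p.reverse, hp.reverse, by simpa using hm⟩

lemma mem_pathSet_iff (hG : G.IsTree) {u v m : X} (p : G.Walk u v) (hp : p.IsPath) :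
    pathSet G u v m ↔ m ∈ p.support := by
  constructor
  · rintro ⟨q, hq, hm⟩; rwa [path_unique hG hq hp] at hm
  · exact fun h => ⟨p, hp, h⟩

lemma pathSet_self_right (hG : G.IsTree) (u v : X) : pathSet G u v v := by
  obtain ⟨p, hp, -⟩ := hG.existsUnique_path u v
  exact ⟨p, hp, p.end_mem_support⟩

lemma pathSet_self_left (hG : G.IsTree) (u v : X) : pathSet G u v u := by
  obtain ⟨p, hp, -⟩ := hG.existsUnique_path u v
  exact ⟨p, hp, p.start_mem_support⟩

lemma F1 (hG : G.IsTree) {a b m : X} (c : X) (h : pathSet G a b m) :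
    pathSet G a c m ∨ pathSet G c b m := by
  obtain ⟨p, hp, -⟩ := hG.existsUnique_path a c
  obtain ⟨q, hq, -⟩ := hG.existsUnique_path c b
  have hm : m ∈ (p.append q).bypass.support :=
    (mem_pathSet_iff hG _ (p.append q).bypass_isPath).mp h
  have := (p.append q).support_bypass_subset hm
  rw [Walk.mem_support_append_iff] at this
  exact this.imp (fun h' => ⟨p, hp, h'⟩) (fun h' => ⟨q, hq, h'⟩)

lemma F2 (hG : G.IsTree) {a b x m : X} (hx : pathSet G a b x) (hm : pathSet G a x m) :
    pathSet G a b m := by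
  obtain ⟨p, hp, hxp⟩ := hx
  have : m ∈ (p.takeUntil x hxp).support :=
    (mem_pathSet_iff hG _ (hp.takeUntil hxp)).mp hm
  exact ⟨p, hp, p.support_takeUntil_subset hxp this⟩

lemma length_eq_dist (hG : G.IsTree) {u v : X} (p : G.Walk u v) (hp : p.IsPath) :
    p.length = G.dist u v := by
  obtain ⟨w, hw⟩ := hG.isConnected.exists_walk_length_eq_dist u v
  refine le_antisymm ?_ (dist_le p)
  calc p.length = w.bypass.length := by rw [path_unique hG hp w.bypass_isPath]
    _ ≤ w.length := w.length_bypass_le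
    _ = _ := hw

lemma dist_add_of_mem (hG : G.IsTree) {u v m : X} (h : pathSet G u v m) :
    G.dist u m + G.dist m v = G.dist u v := by
  obtain ⟨p, hp, hm⟩ := h
  rw [← length_eq_dist hG p hp, ← length_eq_dist hG _ (hp.takeUntil hm),
    ← length_eq_dist hG _ (hp.dropUntil hm)]
  conv_rhs => rw [← p.take_spec hm]
  rw [Walk.length_append]

lemma isPath_concat {u v w : X} {p : G.Walk u v} (hp : p.IsPath) (h : G.Adj v w)
    (hw : w ∉ p.support) : (p.concat h).IsPath := by
  rw [Walk.isPath_def, Walk.support_concat, List.nodup_append]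
  refine ⟨hp.support_nodup, by simp, ?_⟩
  intro a ha b hb
  simp only [List.mem_singleton] at hb
  intro hab; subst hb hab; exact hw ha

lemma med (hG : G.IsTree) (ℓ : X) : ∀ {x z : X} (q : G.Walk x z), q.IsPath →
    ∃ m, m ∈ q.support ∧ pathSet G ℓ x m ∧ pathSet G ℓ z m := by
  intro x z q
  induction q with
  | nil =>
    intro _
    exact ⟨_, by simp, pathSet_self_right hG ℓ _, pathSet_self_right hG ℓ _⟩
  | @cons x w z h q' ih =>
    intro hq
    have hq' : q'.IsPath := hq.of_cons
    obtain ⟨m, hm1, hm2, hm3⟩ := ih hq'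
    obtain ⟨p, hp, -⟩ := hG.existsUnique_path ℓ x
    by_cases hw : w ∈ p.support
    · refine ⟨m, by simp [hm1], ?_, hm3⟩
      have : m ∈ (p.takeUntil w hw).support :=
        (mem_pathSet_iff hG _ (hp.takeUntil hw)).mp hm2
      exact ⟨p, hp, p.support_takeUntil_subset hw this⟩
    · have hp' : (p.concat h).IsPath := isPath_concat hp h hw
      have hmem : m ∈ (p.concat h).support := (mem_pathSet_iff hG _ hp').mp hm2
      rw [Walk.support_concat, List.mem_append] at hmem
      rcases hmem with hmp | hmw
      · exact ⟨m, by simp [hm1], ⟨p, hp, hmp⟩, hm3⟩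
      · simp only [List.mem_singleton] at hmw
        subst hmw
        refine ⟨x, by simp, pathSet_self_right hG ℓ x, ?_⟩
        have hxw : pathSet G ℓ m x := ⟨p.concat h, hp', by simp [Walk.support_concat]⟩
        exact F2 hG hm3 hxw

lemma conv (hG : G.IsTree) {T : Set X} {u v m : X} (hu : hull G T u) (hv : hull G T v)
    (hm : pathSet G u v m) : hull G T m := by
  obtain ⟨a, ha, b, hb, hab⟩ := hu
  obtain ⟨c, hc, d, hd, hcd⟩ := hv
  rcases F1 hG a hm with h1 | h1
  · exact ⟨a, ha, b, hb, F2 hG hab (pathSet_symm h1)⟩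
  · rcases F1 hG c h1 with h2 | h2
    · exact ⟨a, ha, c, hc, h2⟩
    · exact ⟨c, hc, d, hd, F2 hG hcd h2⟩

lemma gate (hG : G.IsTree) {T : Set X} {ℓ x z : X} (hx : isMinimizer G ℓ T x)
    (hz : hull G T z) : pathSet G ℓ z x := by
  obtain ⟨q, hq, -⟩ := hG.existsUnique_path x z
  obtain ⟨m, hmq, hmx, hmz⟩ := med hG ℓ q hq
  have hmhull : hull G T m := conv hG hx.1 hz ⟨q, hq, hmq⟩
  have h1 : G.dist ℓ m + G.dist m x = G.dist ℓ x := dist_add_of_mem hG hmx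
  have h2 : G.dist ℓ x ≤ G.dist ℓ m := hx.2 m hmhull
  have h0 : G.dist m x = 0 := by omega
  have hreach : G.Reachable m x := ⟨(q.takeUntil m hmq).reverse⟩
  have : m = x := hreach.dist_eq_zero_iff.mp h0
  exact this ▸ hmz

end Claim1Aux

theorem claim1_on_path {X : Type*} [Fintype X]
    (G : SimpleGraph X) (hG : G.IsTree)
    (ℓ : X) (S : Set X) (hS : S.Nonempty) (t t' : X)
    (z x y : X)
    (hz : isMinimizer G ℓ S z)
    (hx : isMinimizer G ℓ (S ∪ {t}) x)
    (hy : isMinimizer G ℓ (S ∪ {t'}) y) :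
    pathSet G ℓ z x ∧ pathSet G ℓ z y := by
  classical
  have hmono : ∀ u : X, ∀ T : Set X, hull G S u → S ⊆ T → hull G T u := by
    rintro u T ⟨a, ha, b, hb, hab⟩ hST
    exact ⟨a, hST ha, b, hST hb, hab⟩
  have hzt : hull G (S ∪ {t}) z := hmono z _ hz.1 Set.subset_union_left
  have hzt' : hull G (S ∪ {t'}) z := hmono z _ hz.1 Set.subset_union_left
  exact ⟨Claim1Aux.gate hG hx hzt, Claim1Aux.gate hG hy hzt'⟩
end

section
/- Let G be a tree, ℓ, t ∈ X, S ⊆ X nonempty, and x = π(ℓ, S ∪ {t}). If x ∉ H(S), then x lies on the path P(t, π(t,S)) from t to the distance minimizer of t on H(S); moreover π(t,S) = π(ℓ,S). -/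
open SimpleGraph

section Aux

variable {X : Type*} {G : SimpleGraph X}

/-- In a tree, every path realizes the distance between its endpoints. -/
lemma aux_path_length (hG : G.IsTree) {u v : X} {p : G.Walk u v} (hp : p.IsPath) :
    p.length = G.dist u v := by
  obtain ⟨q, hq, hql⟩ := hG.isConnected.exists_path_of_dist u v
  have h := hG.IsAcyclic.path_unique ⟨p, hp⟩ ⟨q, hq⟩
  rw [← hql]
  exact congrArg Walk.length (congrArg Subtype.val h)

lemma aux_btw_of_mem (hG : G.IsTree) {u v z : X} {p : G.Walk u v} (hp : p.IsPath)
    (hz : z ∈ p.support) : G.dist u z + G.dist z v = G.dist u v := by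
  classical
  have h1 := aux_path_length hG (hp.takeUntil hz)
  have h2 := aux_path_length hG (hp.dropUntil hz)
  have h3 := congrArg Walk.length (Walk.take_spec p hz)
  rw [Walk.length_append, h1, h2, aux_path_length hG hp] at h3
  exact h3

lemma aux_pathSet_iff (hG : G.IsTree) {u v z : X} :
    pathSet G u v z ↔ G.dist u z + G.dist z v = G.dist u v := by
  constructor
  · rintro ⟨p, hp, hz⟩; exact aux_btw_of_mem hG hp hz
  · intro h
    obtain ⟨p, hp, hpl⟩ := hG.isConnected.exists_path_of_dist u z
    obtain ⟨q, hq, hql⟩ := hG.isConnected.exists_path_of_dist z v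
    refine ⟨p.append q, ?_, ?_⟩
    · apply Walk.isPath_of_length_eq_dist
      rw [Walk.length_append, hpl, hql, h]
    · exact (Walk.mem_support_append_iff p q).mpr (Or.inl p.end_mem_support)

lemma aux_isPath_append {u v w : X} {p : G.Walk u v} {q : G.Walk v w}
    (hp : p.IsPath) (hq : q.IsPath)
    (h : ∀ y, y ∈ p.support → y ∈ q.support → y = v) : (p.append q).IsPath := by
  have hqn := hq.support_nodup
  rw [q.support_eq_cons] at hqn
  rw [Walk.isPath_def, Walk.support_append, List.nodup_append]
  refine ⟨hp.support_nodup, (List.nodup_cons.mp hqn).2, ?_⟩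
  intro y hy y' hy' hyy'
  subst hyy'
  have hyq : y ∈ q.support := by
    rw [q.support_eq_cons]; exact List.mem_cons_of_mem _ hy'
  have := h y hy hyq
  subst this
  exact (List.nodup_cons.mp hqn).1 hy'

lemma aux_median (hG : G.IsTree) (a b c : X) :
    ∃ m : X, G.dist a m + G.dist m b = G.dist a b ∧
      G.dist a m + G.dist m c = G.dist a c ∧
      G.dist b m + G.dist m c = G.dist b c := by
  classical
  obtain ⟨p, hp, hpl⟩ := hG.isConnected.exists_path_of_dist a b
  have hne : p.support.toFinset.Nonempty := ⟨a, List.mem_toFinset.mpr p.start_mem_support⟩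
  obtain ⟨m, hmF, hminF⟩ := p.support.toFinset.exists_min_image (fun y => G.dist c y) hne
  have hm : m ∈ p.support := List.mem_toFinset.mp hmF
  have hmin : ∀ y ∈ p.support, G.dist c m ≤ G.dist c y := fun y hy =>
    hminF y (List.mem_toFinset.mpr hy)
  obtain ⟨q, hq, hql⟩ := hG.isConnected.exists_path_of_dist m c
  have hdisj : ∀ y, y ∈ p.support → y ∈ q.support → y = m := by
    intro y hyp hyq
    by_contra hne'
    have hbtw := aux_btw_of_mem hG hq hyq
    have hpos : 0 < G.dist m y :=
      hG.isConnected.pos_dist_of_ne (fun h => hne' h.symm)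
    have e1 : G.dist c y = G.dist y c := dist_comm
    have e2 : G.dist c m = G.dist m c := dist_comm
    have := hmin y hyp
    omega
  refine ⟨m, aux_btw_of_mem hG hp hm, ?_, ?_⟩
  · have hr : ((p.takeUntil m hm).append q).IsPath :=
      aux_isPath_append (hp.takeUntil hm) hq
        (fun y hy hy' => hdisj y (p.support_takeUntil_subset hm hy) hy')
    have h := aux_path_length hG hr
    rw [Walk.length_append, aux_path_length hG (hp.takeUntil hm), hql] at h
    exact h
  · have hrev : ((p.dropUntil m hm).reverse.append q).IsPath :=
      aux_isPath_append (hp.dropUntil hm).reverse hq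
        (fun y hy hy' => hdisj y (p.support_dropUntil_subset hm
          (by rwa [Walk.support_reverse, List.mem_reverse] at hy)) hy')
    have h := aux_path_length hG hrev
    rw [Walk.length_append, Walk.length_reverse,
      aux_path_length hG (hp.dropUntil hm), hql] at h
    have e : G.dist m b = G.dist b m := dist_comm
    omega

lemma aux_trans (hc : G.Connected) {a c b e : X}
    (h1 : G.dist a c + G.dist c b = G.dist a b)
    (h2 : G.dist a b + G.dist b e = G.dist a e) :
    G.dist a c + G.dist c e = G.dist a e ∧ G.dist c b + G.dist b e = G.dist c e := by
  have t1 : G.dist c e ≤ G.dist c b + G.dist b e := hc.dist_triangle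
  have t2 : G.dist a e ≤ G.dist a c + G.dist c e := hc.dist_triangle
  omega

lemma aux_symm {a z b : X} (h : G.dist a z + G.dist z b = G.dist a b) :
    G.dist b z + G.dist z a = G.dist b a := by
  have e1 : G.dist b z = G.dist z b := dist_comm
  have e2 : G.dist z a = G.dist a z := dist_comm
  have e3 : G.dist b a = G.dist a b := dist_comm
  omega

lemma aux_split (hG : G.IsTree) {p q x μ : X}
    (hx : G.dist p x + G.dist x q = G.dist p q)
    (hμ : G.dist p μ + G.dist μ q = G.dist p q) :
    G.dist p x + G.dist x μ = G.dist p μ ∨ G.dist μ x + G.dist x q = G.dist μ q := by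
  classical
  obtain ⟨w, hw, hxw⟩ := (aux_pathSet_iff hG).mpr hx
  obtain ⟨w', hw', hμw⟩ := (aux_pathSet_iff hG).mpr hμ
  have hww : w = w' := congrArg Subtype.val (hG.IsAcyclic.path_unique ⟨w, hw⟩ ⟨w', hw'⟩)
  rw [← hww] at hμw
  rw [← Walk.take_spec w hxw, Walk.mem_support_append_iff] at hμw
  rcases hμw with h | h
  · right
    have hb := aux_btw_of_mem hG (hw.takeUntil hxw) h
    exact (aux_trans hG.isConnected hb hx).2
  · left
    have hb := aux_btw_of_mem hG (hw.dropUntil hxw) h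
    exact aux_symm (aux_trans hG.isConnected (aux_symm hb) (aux_symm hx)).2

lemma aux_K (hG : G.IsTree) {p q x : X} (r : X)
    (h : G.dist p x + G.dist x q = G.dist p q) :
    G.dist p x + G.dist x r = G.dist p r ∨ G.dist q x + G.dist x r = G.dist q r := by
  obtain ⟨μ, h1, h2, h3⟩ := aux_median hG p q r
  rcases aux_split hG h h1 with hc | hc
  · left; exact (aux_trans hG.isConnected hc h2).1
  · right; exact (aux_trans hG.isConnected (aux_symm hc) h3).1

lemma aux_convex (hG : G.IsTree) {S : Set X} {a b c : X}
    (ha : hull G S a) (hb : hull G S b)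
    (h : G.dist a c + G.dist c b = G.dist a b) : hull G S c := by
  obtain ⟨s1, hs1, s2, hs2, hpa⟩ := ha
  obtain ⟨s3, hs3, s4, hs4, hpb⟩ := hb
  rw [aux_pathSet_iff hG] at hpa hpb
  rcases aux_K hG s1 h with hc | hc
  · have := (aux_trans hG.isConnected (aux_symm hc) hpa).1
    exact ⟨s1, hs1, s2, hs2, (aux_pathSet_iff hG).mpr this⟩
  · rcases aux_K hG s3 (aux_symm hc) with hc2 | hc2
    · exact ⟨s1, hs1, s3, hs3, (aux_pathSet_iff hG).mpr hc2⟩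
    · have := (aux_trans hG.isConnected (aux_symm hc2) hpb).1
      exact ⟨s3, hs3, s4, hs4, (aux_pathSet_iff hG).mpr this⟩

lemma aux_gate (hG : G.IsTree) {S : Set X} {t m : X}
    (hmem : hull G S m) (hmin : ∀ y, hull G S y → G.dist t m ≤ G.dist t y) :
    ∀ y, hull G S y → G.dist t m + G.dist m y = G.dist t y := by
  intro y hy
  obtain ⟨μ, h1, h2, h3⟩ := aux_median hG t m y
  have hμ : hull G S μ := aux_convex hG hmem hy h3
  have hle := hmin μ hμ
  have hzero : G.dist μ m = 0 := by omega
  have hEq : μ = m := hG.isConnected.dist_eq_zero_iff.mp hzero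
  subst hEq
  exact h2

end Aux

theorem minimizer_not_mem_hull {X : Type*} [Fintype X]
    (G : SimpleGraph X) (hG : G.IsTree)
    (ℓ t : X) (S : Set X) (hS : S.Nonempty)
    (x : X) (hx : isMinimizer G ℓ (S ∪ {t}) x)
    (hxS : ¬ hull G S x)
    (m : X) (hm : isMinimizer G t S m)
    (z : X) (hz : isMinimizer G ℓ S z) :
    pathSet G t m x ∧ m = z := by
  obtain ⟨hxmem, hxmin⟩ := hx
  obtain ⟨hmmem, hmmin⟩ := hm
  obtain ⟨hzmem, hzmin⟩ := hz
  have conn := hG.isConnected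
  have mono : ∀ y, hull G S y → hull G (S ∪ {t}) y := by
    rintro y ⟨a, ha, b, hb, hp⟩; exact ⟨a, Or.inl ha, b, Or.inl hb, hp⟩
  have selfhull : ∀ s ∈ S, hull G S s := fun s hs =>
    ⟨s, hs, s, hs, (aux_pathSet_iff hG).mpr (by simp)⟩
  -- Step 1: there is s ∈ S with x between t and s
  obtain ⟨a, ha, b, hb, hpx⟩ := hxmem
  rw [aux_pathSet_iff hG] at hpx
  have step1 : ∃ s ∈ S, G.dist t x + G.dist x s = G.dist t s := by
    rcases ha with ha | ha
    · rcases hb with hb | hb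
      · exact absurd ⟨a, ha, b, hb, (aux_pathSet_iff hG).mpr hpx⟩ hxS
      · rw [Set.mem_singleton_iff] at hb
        rw [hb] at hpx
        exact ⟨a, ha, aux_symm hpx⟩
    · rw [Set.mem_singleton_iff] at ha
      rw [ha] at hpx
      rcases hb with hb | hb
      · exact ⟨b, hb, hpx⟩
      · rw [Set.mem_singleton_iff] at hb
        rw [hb] at hpx
        have e1 : G.dist x t = G.dist t x := dist_comm
        have e2 : G.dist t t = 0 := by simp
        have hzero : G.dist t x = 0 := by omega
        have hEq : t = x := conn.dist_eq_zero_iff.mp hzero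
        obtain ⟨s, hs⟩ := hS
        refine ⟨s, hs, ?_⟩
        rw [← hEq]
        simp
  -- Step 2: gate property of m on hull S w.r.t. t
  have Gm := aux_gate hG hmmem hmmin
  -- Step 3: x lies between t and m
  obtain ⟨s, hs, hts⟩ := step1
  have hms : G.dist t m + G.dist m s = G.dist t s := Gm s (selfhull s hs)
  have goal1 : G.dist t x + G.dist x m = G.dist t m := by
    rcases aux_split hG hts hms with h | h
    · exact h
    · exact absurd (aux_convex hG hmmem (selfhull s hs) h) hxS
  -- Step 4: gate property of x on hull (S ∪ {t}) w.r.t. ℓ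
  have Gx := aux_gate hG ⟨a, ha, b, hb, (aux_pathSet_iff hG).mpr hpx⟩ hxmin
  have hlm : G.dist ℓ x + G.dist x m = G.dist ℓ m := Gx m (mono m hmmem)
  -- Step 5: m is the gate of ℓ on hull S
  have gatelm : ∀ y, hull G S y → G.dist ℓ m + G.dist m y = G.dist ℓ y := by
    intro y hy
    have h1 := Gx y (mono y hy)
    have h2 := Gm y hy
    have h3 := (aux_trans conn goal1 h2).2
    omega
  have h4 := gatelm z hzmem
  have h5 := hzmin m hmmem
  have hzero : G.dist m z = 0 := by omega
  exact ⟨(aux_pathSet_iff hG).mpr goal1, conn.dist_eq_zero_iff.mp hzero⟩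
end

section
/- If a domain D is single-peaked on a tree G, then every extreme rule on G is efficient on D: for every profile P, the selected alternative π(ℓ,τ(P)) belongs to the path hull H(τ(P)), and no alternative is strictly preferred to any element of H(τ(P)) by all agents. -/
open SimpleGraph

/-!
Let `y` lie on the path between the peaks `t i` and `t j`. For any `a`, the tree path from `t i`
to `t j` runs inside the union of the paths from `t i` to `a` and from `a` to `t j`, so `y` lies
between `a` and the peak of agent `i` or of agent `j`; single-peakedness makes that agent prefer
`y` to `a`.
-/

theorem SimpleGraph.IsAcyclic.pathSet_or_pathSet {X : Type*} {G : SimpleGraph X}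
    (hG : G.IsAcyclic) {x y z a : X} (hxa : G.Reachable x a) (h : pathSet G x y z) :
    pathSet G x a z ∨ pathSet G y a z := by
  obtain ⟨p, hp, hz⟩ := h
  obtain ⟨pay⟩ := hxa.symm.trans ⟨p⟩
  obtain ⟨pxa⟩ := hxa
  classical
  have hp_eq : (pxa.bypass.append pay.bypass).bypass = p :=
    congrArg Subtype.val <|
      (hG.subsingleton_path x y).elim ⟨_, Walk.bypass_isPath _⟩ ⟨p, hp⟩
  rw [← hp_eq] at hz
  rcases (Walk.mem_support_append_iff _ _).mp (Walk.support_bypass_subset_support _ hz) with h | h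
  · exact Or.inl ⟨pxa.bypass, Walk.bypass_isPath _, h⟩
  · exact Or.inr ⟨pay.bypass.reverse, (Walk.bypass_isPath _).reverse, by simpa using h⟩

theorem singlePeakedAt.not_rel_of_pathSet {X : Type*} {G : SimpleGraph X} {P : X → X → Prop}
    [IsStrictOrder X P] {t a y : X} (hsp : singlePeakedAt G P t) (h : pathSet G t a y) :
    ¬ P a y := by
  rcases eq_or_ne a y with rfl | hay
  · exact irrefl a
  · exact asymm (hsp a y hay h)

theorem extreme_rule_efficient_on_sp_general {X : Type*}
    (G : SimpleGraph X) (hG : G.IsTree)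
    (ℓ : X)
    (n : ℕ)
    (D : Set (X → X → Prop))
    (hD : ∀ P ∈ D, IsStrictTotalOrder X P)
    (hsp : ∀ P ∈ D, ∀ s : X, isTop P s → singlePeakedAt G P s)
    (P : Fin n → (X → X → Prop)) (hP : ∀ i, P i ∈ D)
    (t : Fin n → X) (ht : ∀ i, isTop (P i) (t i))
    (c : X) (hc : isMinimizer G ℓ (Set.range t) c) :
    hull G (Set.range t) c ∧
      ∀ a y : X, hull G (Set.range t) y → ¬ (∀ i, P i a y) := by
  refine ⟨hc.1, fun a y hy hall => ?_⟩
  obtain ⟨_, ⟨i, rfl⟩, _, ⟨j, rfl⟩, hpath⟩ := hy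
  have agent_not_pref (k : Fin n) (h : pathSet G (t k) a y) : ¬ P k a y :=
    haveI := hD (P k) (hP k)
    (hsp (P k) (hP k) (t k) (ht k)).not_rel_of_pathSet h
  rcases hG.isAcyclic.pathSet_or_pathSet (hG.connected (t i) a) hpath with h | h
  · exact agent_not_pref i h (hall i)
  · exact agent_not_pref j h (hall j)

theorem extreme_rule_efficient_on_sp {X : Type*} [Fintype X]
    (G : SimpleGraph X) (hG : G.IsTree)
    (ℓ : X) (hℓ : isLeaf G ℓ)
    (n : ℕ) (hn : 0 < n)
    (D : Set (X → X → Prop))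
    (hD : ∀ P ∈ D, IsStrictTotalOrder X P)
    (hsp : ∀ P ∈ D, ∀ s : X, isTop P s → singlePeakedAt G P s)
    (P : Fin n → (X → X → Prop)) (hP : ∀ i, P i ∈ D)
    (t : Fin n → X) (ht : ∀ i, isTop (P i) (t i))
    (c : X) (hc : isMinimizer G ℓ (Set.range t) c) :
    hull G (Set.range t) c ∧
      ∀ a y : X, hull G (Set.range t) y → ¬ (∀ i, P i a y) :=
  extreme_rule_efficient_on_sp_general G hG ℓ n D hD hsp P hP t ht c hc
end
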